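/- For every nonnegative integer n: ∑_{k=0}^{n} (10n−k+8)·(−n)_k(−1/2−n)_k/[(1)_k(−4n−2)_k] · (8/9)^k = 2·Γ(1/2)·Γ(3n+3)/(9^n·Γ(2n+3/2)·Γ(n+1)), i.e. the right side equals 2·(3n+2)!·Γ(1/2)/(9^n·n!·Γ(2n+3/2)). -/

import Mathlib

/-!
Both sides satisfy `a (n + 1) = ρ n * a n` with `ρ n = 4 (3n+4)(3n+5) / (3 (4n+3)(4n+5))` and
`a 0 = 8`.

For the Gamma side this is the functional equation `Γ (x + 1) = x Γ x`. For the sum it is a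
Wilf–Zeilberger telescoping: writing `F n k` for the summand, with hypergeometric part `h n k`,
`F (n+1) k - ρ n * F n k = G n (k+1) - G n k` where `G n (k+1)` is a rational function of `n, k`
times `h n k`; summing over `k ≤ n + 1` telescopes to `G n (n+2) - G n 0 = 0`, since `(-n)_k`
vanishes for `k > n`. Every term of the identity is `h n j` times a rational function, because
the ratios `h n (j+1) / h n j` and `h (n+1) (j+1) / h n j` are rational.
-/

open Finset Polynomial

theorem ascPochhammer_eval_add {R : Type*} [CommSemiring R] (a b : ℕ) (x : R) :
    (ascPochhammer R (a + b)).eval x =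
      (ascPochhammer R a).eval x * (ascPochhammer R b).eval (x + a) := by
  rw [← ascPochhammer_mul, eval_mul, eval_comp]
  simp

theorem ascPochhammer_eval_succ_left {R : Type*} [CommSemiring R] (m : ℕ) (x : R) :
    (ascPochhammer R (m + 1)).eval x = x * (ascPochhammer R m).eval (x + 1) := by
  rw [add_comm, ascPochhammer_eval_add]
  simp

theorem ascPochhammer_eval_mul_eval_add_comm {R : Type*} [CommSemiring R] (a b : ℕ) (x : R) :
    (ascPochhammer R a).eval x * (ascPochhammer R b).eval (x + a) =
      (ascPochhammer R b).eval x * (ascPochhammer R a).eval (x + b) := by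
  rw [← ascPochhammer_eval_add, ← ascPochhammer_eval_add, add_comm]

noncomputable def hyperTerm (n k : ℕ) : ℝ :=
  (ascPochhammer ℝ k).eval (-(n : ℝ)) * (ascPochhammer ℝ k).eval (-1 / 2 - (n : ℝ)) /
      ((ascPochhammer ℝ k).eval 1 * (ascPochhammer ℝ k).eval (-(4 * n : ℝ) - 2)) *
    (8 / 9 : ℝ) ^ k

theorem hyperTerm_succ (n j : ℕ) :
    hyperTerm n (j + 1) = hyperTerm n j *
      (8 * (j - n) * (j - 1 / 2 - n) / (9 * (j + 1) * (j - 4 * n - 2))) := by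
  simp only [hyperTerm, ascPochhammer_succ_eval, pow_succ, div_eq_mul_inv, mul_inv]
  ring

theorem hyperTerm_self_succ (n : ℕ) : hyperTerm n (n + 1) = 0 := by
  simp [hyperTerm, ascPochhammer_eval_neg_coe_nat_of_lt (Nat.lt_succ_self n)]

theorem hyperTerm_succ_succ (n j : ℕ) (hj : j ≤ 4 * n + 2) :
    hyperTerm (n + 1) (j + 1) = hyperTerm n j *
      (8 * (n + 1) * (n + 3 / 2) * (j - 4 * n - 5) * (j - 4 * n - 4) * (j - 4 * n - 3) /
        (9 * (j + 1) * (4 * n + 3) * (4 * n + 4) * (4 * n + 5) * (4 * n + 6))) := by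
  have hJ : (j : ℝ) ≤ 4 * n + 2 := by exact_mod_cast hj
  have hA : (ascPochhammer ℝ (j + 1)).eval (-((n + 1 : ℕ) : ℝ)) =
      -(n + 1) * (ascPochhammer ℝ j).eval (-(n : ℝ)) := by
    rw [ascPochhammer_eval_succ_left]; push_cast; ring_nf
  have hB : (ascPochhammer ℝ (j + 1)).eval (-1 / 2 - ((n + 1 : ℕ) : ℝ)) =
      -(n + 3 / 2) * (ascPochhammer ℝ j).eval (-1 / 2 - (n : ℝ)) := by
    rw [ascPochhammer_eval_succ_left]; push_cast; ring_nf
  have hC : (ascPochhammer ℝ (j + 1)).eval 1 = (ascPochhammer ℝ j).eval 1 * (j + 1) := by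
    rw [ascPochhammer_succ_eval]; ring
  -- `-4(n+1)-2` is `-4n-2` shifted by four, so four factors of the Pochhammer product are traded
  have hD : (ascPochhammer ℝ (j + 1)).eval (-(4 * ((n + 1 : ℕ) : ℝ)) - 2) *
      ((j - 4 * n - 5) * (j - 4 * n - 4) * (j - 4 * n - 3)) =
      (4 * n + 3) * (4 * n + 4) * (4 * n + 5) * (4 * n + 6) *
        (ascPochhammer ℝ j).eval (-(4 * n : ℝ) - 2) := by
    have h := ascPochhammer_eval_mul_eval_add_comm j 4 (-(4 * n : ℝ) - 6)
    rw [show -(4 * n : ℝ) - 6 + ((4 : ℕ) : ℝ) = -(4 * n) - 2 by push_cast; ring] at h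
    simp only [ascPochhammer_succ_eval, ascPochhammer_zero, eval_one] at h
    rw [ascPochhammer_succ_eval]
    push_cast
    rw [show -(4 * ((n : ℝ) + 1)) - 2 = -(4 * n) - 6 by ring]
    linear_combination h
  have hL : ((j : ℝ) - 4 * n - 5) * (j - 4 * n - 4) * (j - 4 * n - 3) ≠ 0 := by
    refine mul_ne_zero (mul_ne_zero ?_ ?_) ?_ <;> linarith
  rw [← eq_div_iff hL] at hD
  unfold hyperTerm
  rw [hA, hB, hC, hD]
  field_simp
  ring

noncomputable def summand (n k : ℕ) : ℝ := (10 * n - k + 8) * hyperTerm n k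

noncomputable def recRatio (n : ℕ) : ℝ :=
  4 * (3 * n + 4) * (3 * n + 5) / (3 * (4 * n + 3) * (4 * n + 5))

-- The certificate polynomial comes from Zeilberger's algorithm.
noncomputable def certPoly (n k : ℝ) : ℝ :=
  960 * n ^ 4 + 4944 * n ^ 3 + 9248 * n ^ 2 + 7440 * n + 2160
    + k * (-816 * n ^ 3 - 3384 * n ^ 2 - 4414 * n - 1824)
    + k ^ 2 * (72 * n ^ 2 + 360 * n + 323) + k ^ 3 * (30 * n + 24) - 3 * k ^ 4

noncomputable def wzCert (n : ℕ) : ℕ → ℝ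
  | 0 => 0
  | k + 1 => -certPoly n (k + 1) * hyperTerm n k / (6 * (4 * n + 3) * (4 * n + 5) * (k - 4 * n - 2))

theorem wzCert_self_add_two (n : ℕ) : wzCert n (n + 2) = 0 := by
  simp [wzCert, hyperTerm_self_succ]

theorem summand_succ_sub (n k : ℕ) (hk : k ≤ 4 * n + 1) :
    summand (n + 1) k - recRatio n * summand n k = wzCert n (k + 1) - wzCert n k := by
  have hN : (0 : ℝ) ≤ n := n.cast_nonneg
  cases k with
  | zero =>
    -- nonvanishing facts are stated in the normal form in which `field_simp` looks for them
    have h2 : (0 - n * 4 - 2 : ℝ) ≠ 0 := by linarith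
    simp only [summand, wzCert, hyperTerm, recRatio, certPoly, ascPochhammer_zero, eval_one]
    push_cast
    field_simp
    ring
  | succ j =>
    have hJ : (j : ℝ) ≤ 4 * n := by exact_mod_cast (by omega : j ≤ 4 * n)
    have h1 : (j : ℝ) - n * 4 - 2 ≠ 0 := by linarith
    have h2 : (j + 1 - n * 4 - 2 : ℝ) ≠ 0 := by linarith
    simp only [summand, wzCert, hyperTerm_succ_succ n j (by omega), hyperTerm_succ, recRatio,
      certPoly]
    push_cast
    field_simp
    ring

theorem sum_summand_succ (n : ℕ) :
    ∑ k ∈ range (n + 2), summand (n + 1) k = recRatio n * ∑ k ∈ range (n + 1), summand n k := by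
  have htel : ∑ k ∈ range (n + 2), (summand (n + 1) k - recRatio n * summand n k) = 0 := by
    rw [sum_congr rfl fun k hk => summand_succ_sub n k (by simp at hk; omega), sum_range_sub,
      wzCert_self_add_two, wzCert, sub_zero]
  rwa [sum_sub_distrib, ← mul_sum, sum_range_succ (summand n), summand, hyperTerm_self_succ,
    mul_zero, add_zero, sub_eq_zero] at htel

noncomputable def closedForm (n : ℕ) : ℝ :=
  2 * Real.Gamma (1 / 2) * Real.Gamma (3 * (n : ℝ) + 3) /
    (9 ^ n * Real.Gamma (2 * (n : ℝ) + 3 / 2) * Real.Gamma ((n : ℝ) + 1))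

theorem closedForm_zero : closedForm 0 = 8 := by
  have h32 : Real.Gamma (3 / 2) = Real.Gamma (1 / 2) / 2 := by
    rw [show (3 / 2 : ℝ) = 1 / 2 + 1 by norm_num, Real.Gamma_add_one (by norm_num)]
    ring
  have hpos : 0 < Real.Gamma (1 / 2) := Real.Gamma_pos_of_pos (by norm_num)
  simp only [closedForm, Nat.cast_zero, mul_zero, zero_add, pow_zero, one_mul, Real.Gamma_one,
    mul_one, h32]
  rw [show (3 : ℝ) = 2 + 1 by norm_num, Real.Gamma_add_one (by norm_num), Real.Gamma_two]
  field_simp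
  norm_num

theorem closedForm_succ (n : ℕ) : closedForm (n + 1) = recRatio n * closedForm n := by
  have hN : (0 : ℝ) ≤ n := n.cast_nonneg
  have hA : Real.Gamma (3 * ((n + 1 : ℕ) : ℝ) + 3) =
      (3 * n + 3) * (3 * n + 4) * (3 * n + 5) * Real.Gamma (3 * n + 3) := by
    rw [show 3 * ((n + 1 : ℕ) : ℝ) + 3 = 3 * n + 3 + 1 + 1 + 1 by push_cast; ring,
      Real.Gamma_add_one (by positivity), Real.Gamma_add_one (by positivity),
      Real.Gamma_add_one (by positivity)]
    ring
  have hB : Real.Gamma (2 * ((n + 1 : ℕ) : ℝ) + 3 / 2) =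
      (2 * n + 3 / 2) * (2 * n + 5 / 2) * Real.Gamma (2 * n + 3 / 2) := by
    rw [show 2 * ((n + 1 : ℕ) : ℝ) + 3 / 2 = 2 * n + 3 / 2 + 1 + 1 by push_cast; ring,
      Real.Gamma_add_one (by positivity), Real.Gamma_add_one (by positivity)]
    ring
  have hC : Real.Gamma (((n + 1 : ℕ) : ℝ) + 1) = (n + 1) * Real.Gamma (n + 1) := by
    rw [Nat.cast_succ, Real.Gamma_add_one (by positivity)]
  have hG1 : Real.Gamma (2 * n + 3 / 2) ≠ 0 := (Real.Gamma_pos_of_pos (by positivity)).ne'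
  have hG2 : Real.Gamma (n + 1) ≠ 0 := (Real.Gamma_pos_of_pos (by positivity)).ne'
  unfold closedForm recRatio
  rw [hA, hB, hC, pow_succ]
  field_simp
  ring

theorem sum_summand_eq_closedForm (n : ℕ) :
    ∑ k ∈ range (n + 1), summand n k = closedForm n := by
  induction n with
  | zero => simp [summand, hyperTerm, closedForm_zero]
  | succ n ih => rw [sum_summand_succ, ih, closedForm_succ]

theorem strange_identity_72d (n : ℕ) :
    ∑ k ∈ Finset.range (n + 1),
      ((10 * n : ℝ) - k + 8) *
        ((ascPochhammer ℝ k).eval (-(n : ℝ)) * (ascPochhammer ℝ k).eval (-1 / 2 - (n : ℝ))) /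
        ((ascPochhammer ℝ k).eval 1 * (ascPochhammer ℝ k).eval (-(4 * n : ℝ) - 2)) *
        (8 / 9 : ℝ) ^ k
      = 2 * Real.Gamma (1 / 2) * Real.Gamma (3 * (n : ℝ) + 3) /
          (9 ^ n * Real.Gamma (2 * (n : ℝ) + 3 / 2) * Real.Gamma ((n : ℝ) + 1)) := by
  rw [← closedForm, ← sum_summand_eq_closedForm]
  refine sum_congr rfl fun k _ => ?_
  rw [summand, hyperTerm, mul_div_assoc, mul_assoc]
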